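/- Let R be a ring and C a subring contained in the center of R such that R is finitely generated as a C-module, say R = C·r₁ + ⋯ + C·r_t. Then R satisfies property PP: for every ascending chain P₁ ⊆ P₂ ⊆ ⋯ of prime two-sided ideals of R, the union ⋃ₙ Pₙ is a prime two-sided ideal of R. -/

import Mathlib

/-- A two-sided ideal `P` of a ring `R` is prime if `P ≠ R` and
`aRb ⊆ P` implies `a ∈ P` or `b ∈ P`. -/
def IsPrimeTSI {R : Type*} [Ring R] (P : TwoSidedIdeal R) : Prop :=
  P ≠ ⊤ ∧ ∀ a b : R, (∀ r : R, a * r * b ∈ P) → a ∈ P ∨ b ∈ P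

/-- If `R` is generated as a module over a central subring `C` by finitely many
elements `r₁, …, r_t`, then the union of any countable ascending chain of prime
two-sided ideals of `R` is a prime two-sided ideal. -/
theorem stmt_0 {R : Type*} [Ring R] (C : Subring R) (hC : C ≤ Subring.center R)
    (t : ℕ) (r : Fin t → R)
    (hfg : ∀ a : R, ∃ c : Fin t → C, a = ∑ i, (c i : R) * r i)
    (P : ℕ → TwoSidedIdeal R) (hchain : Monotone P)
    (hprime : ∀ n, IsPrimeTSI (P n)) :
    ∃ Q : TwoSidedIdeal R, (Q : Set R) = (⋃ n, (P n : Set R)) ∧ IsPrimeTSI Q := by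
  set S : Set R := ⋃ n, (P n : Set R) with hS
  have hmemS : ∀ x : R, x ∈ S ↔ ∃ n, x ∈ P n := by
    intro x; simp [hS]
  refine ⟨TwoSidedIdeal.mk' S ?_ ?_ ?_ ?_ ?_, ?_, ?_, ?_⟩
  · exact (hmemS 0).2 ⟨0, (P 0).zero_mem⟩
  · rintro x y hx hy
    obtain ⟨m, hm⟩ := (hmemS x).1 hx
    obtain ⟨n, hn⟩ := (hmemS y).1 hy
    exact (hmemS _).2 ⟨max m n, (P _).add_mem (hchain (le_max_left m n) hm)
      (hchain (le_max_right m n) hn)⟩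
  · rintro x hx
    obtain ⟨m, hm⟩ := (hmemS x).1 hx
    exact (hmemS _).2 ⟨m, (P m).neg_mem hm⟩
  · rintro x y hy
    obtain ⟨m, hm⟩ := (hmemS y).1 hy
    exact (hmemS _).2 ⟨m, (P m).mul_mem_left x y hm⟩
  · rintro x y hx
    obtain ⟨m, hm⟩ := (hmemS x).1 hx
    exact (hmemS _).2 ⟨m, (P m).mul_mem_right x y hm⟩
  · ext x; simp [TwoSidedIdeal.mem_mk', SetLike.mem_coe]
  · -- Q ≠ ⊤
    intro htop
    have h1 : (1 : R) ∈ S := by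
      have h1' : (1 : R) ∈ (⊤ : TwoSidedIdeal R) := trivial
      rw [← htop, TwoSidedIdeal.mem_mk'] at h1'; exact h1'
    obtain ⟨n, hn⟩ := (hmemS 1).1 h1
    exact (hprime n).1 (eq_top_iff.2 fun x _ => by
      simpa using (P n).mul_mem_left x 1 hn)
  · -- primeness
    intro a b hab
    simp only [TwoSidedIdeal.mem_mk'] at hab ⊢
    -- for each generator r i, a * r i * b lies in some P (n i)
    have hch : ∀ i : Fin t, ∃ n, a * r i * b ∈ P n := fun i => (hmemS _).1 (hab (r i))
    choose n hn using hch
    set N : ℕ := Finset.univ.sup n with hN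
    have hNn : ∀ i, a * r i * b ∈ P N := fun i =>
      hchain (Finset.le_sup (Finset.mem_univ i)) (hn i)
    have key : ∀ x : R, a * x * b ∈ P N := by
      intro x
      obtain ⟨c, hc⟩ := hfg x
      have : a * x * b = ∑ i, (c i : R) * (a * r i * b) := by
        rw [hc, Finset.mul_sum, Finset.sum_mul]
        refine Finset.sum_congr rfl fun i _ => ?_
        have hcen : (c i : R) * a = a * (c i : R) :=
          ((Subring.mem_center_iff.1 (hC (c i).2)) a).symm
        rw [← mul_assoc, ← hcen]
        simp [mul_assoc]
      rw [this]
      exact TwoSidedIdeal.finsetSum_mem _ _ _ fun i _ =>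
        (P N).mul_mem_left _ _ (hNn i)
    rcases (hprime N).2 a b key with h | h
    · exact Or.inl ((hmemS a).2 ⟨N, h⟩)
    · exact Or.inr ((hmemS b).2 ⟨N, h⟩)
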